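/- arXiv:0801.4129 — 5 statements merged into one kernel-verified Lean document; each statement's English description precedes it below -/
import Mathlib

section
/- For all real P_X > 1 and 1 < P_J < P_X, with C_2 = (1/2)·log₂(P_J), the quantity C_2 + (1/2)·log₂(1 + P_X/(P_J+1)) − (1/2)·log₂((1+P_X)/(1 + min{1+P_X, P_J·P_X/(P_X+1)}·2^(−2C_2))) is at most 1. -/
/-!
With `2 ^ (2 C₂) = P_J` the jamming term is `P_J * P_X / (P_X + 1) / P_J = P_X / (P_X + 1)`, and the gap
becomes half the binary logarithm of
`P_J / (P_J + 1) * (P_X + P_J + 1) / (P_X + 1) * (2 P_X + 1) / (P_X + 1)`.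
The first factor is below `1` and each of the other two is at most `2`, since `P_J ≤ P_X + 1`;
hence the gap is at most `½ log₂ 4 = 1`.
-/

open Real

theorem rpow_neg_logb_of_pos {b x : ℝ} (b_pos : 0 < b) (b_ne_one : b ≠ 1) (hx : 0 < x) :
    b ^ (-logb b x) = x⁻¹ := by
  rw [rpow_neg b_pos.le, rpow_logb b_pos b_ne_one hx]

theorem mul_div_add_one_le_one_add {J X : ℝ} (hX : 0 < X) (hJX : J ≤ X) :
    J * X / (X + 1) ≤ 1 + X := by
  rw [div_le_iff₀ (by linarith)]
  nlinarith

theorem gap_ratio_le_four {J X : ℝ} (hJ : 0 < J) (hX : 0 ≤ X) (hJX : J ≤ X + 1) :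
    J * (1 + X / (J + 1)) / ((1 + X) / (1 + J * X / (X + 1) * J⁻¹)) ≤ 4 := by
  have hJ1 : 0 < J + 1 := by linarith
  have hX1 : 0 < X + 1 := by linarith
  have factor : J * (1 + X / (J + 1)) / ((1 + X) / (1 + J * X / (X + 1) * J⁻¹))
      = J / (J + 1) * ((X + J + 1) / (X + 1)) * ((2 * X + 1) / (X + 1)) := by
    field_simp
    ring
  have h₁ : J / (J + 1) ≤ 1 := (div_le_one hJ1).2 (by linarith)
  have h₂ : (X + J + 1) / (X + 1) ≤ 2 := (div_le_iff₀ hX1).2 (by linarith)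
  have h₃ : (2 * X + 1) / (X + 1) ≤ 2 := (div_le_iff₀ hX1).2 (by linarith)
  rw [factor]
  calc J / (J + 1) * ((X + J + 1) / (X + 1)) * ((2 * X + 1) / (X + 1))
      ≤ 1 * 2 * 2 := by gcongr
    _ = 4 := by norm_num

theorem logb_two_add_sub_le_two {a b c : ℝ} (ha : 0 < a) (hb : 0 < b) (hc : 0 < c)
    (h : a * b / c ≤ 4) : logb 2 a + logb 2 b - logb 2 c ≤ 2 := by
  have hlog : logb 2 (a * b / c) ≤ 2 :=
    (logb_le_iff_le_rpow one_lt_two (by positivity)).2 (by norm_num; exact h)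
  rwa [logb_div (by positivity) hc.ne', logb_mul ha.ne' hb.ne'] at hlog

theorem caseA_gap_lowJ_general (P_X P_J : ℝ) (hJ1 : 1 < P_J) (hJ : P_J < P_X) :
    let C2 := (1/2) * logb 2 P_J
    C2 + (1/2) * logb 2 (1 + P_X / (P_J + 1))
      - (1/2) * logb 2 ((1 + P_X) /
          (1 + min (1 + P_X) (P_J * P_X / (P_X + 1)) * (2:ℝ) ^ (-(2 * C2)))) ≤ 1 := by
  intro C2
  have hC2 : C2 = (1/2) * logb 2 P_J := rfl
  have hPJ : 0 < P_J := by linarith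
  have hPX : 0 < P_X := by linarith
  have hmin : min (1 + P_X) (P_J * P_X / (P_X + 1)) = P_J * P_X / (P_X + 1) :=
    min_eq_right (mul_div_add_one_le_one_add hPX hJ.le)
  have hpow : (2:ℝ) ^ (-(2 * C2)) = P_J⁻¹ := by
    rw [show 2 * C2 = logb 2 P_J by rw [hC2]; ring]
    exact rpow_neg_logb_of_pos two_pos (by norm_num) hPJ
  rw [hmin, hpow]
  have hgap := logb_two_add_sub_le_two hPJ (by positivity) (by positivity)
    (gap_ratio_le_four hPJ hPX.le (by linarith))
  rw [hC2]
  linarith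

theorem caseA_gap_lowJ (P_X P_J : ℝ) (hX : 1 < P_X) (hJ1 : 1 < P_J) (hJ : P_J < P_X) :
    let C2 := (1/2) * logb 2 P_J
    C2 + (1/2) * logb 2 (1 + P_X / (P_J + 1))
      - (1/2) * logb 2 ((1 + P_X) /
          (1 + min (1 + P_X) (P_J * P_X / (P_X + 1)) * (2:ℝ) ^ (-(2 * C2)))) ≤ 1 :=
  caseA_gap_lowJ_general P_X P_J hJ1 hJ
end

section
/- For all real P_X > 1 and 1 < P_J < (1+P_X)²/P_X, with C_1 = (1/2)·log₂(1+P_X) and C_2 = (1/2)·log₂(P_J), the gap (1/2)·(C_1 + C_2 + (1/2)·log₂(1+P_X/P_J)) + (1/4)·log₂(8πe) − (1/2)·log₂(P_X/(P_X/(P_X+1) + P_X/(2^(2C_1)−1) + P_J·P_X/(P_X+1)²·2^(−2C_2))) is at most (1/4)·log₂(8·4·9·π·e) ≈ 2.816. -/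
open Real

theorem caseC_gap_modulo (P_X P_J : ℝ) (hX : 1 < P_X) (hJ1 : 1 < P_J)
    (hJ2 : P_J < (1 + P_X) ^ 2 / P_X) :
    let C1 := (1/2) * logb 2 (1 + P_X)
    let C2 := (1/2) * logb 2 P_J
    (1/2) * (C1 + C2 + (1/2) * logb 2 (1 + P_X / P_J))
      + (1/4) * logb 2 (8 * π * exp 1)
      - (1/2) * logb 2 (P_X /
          (P_X / (P_X + 1) + P_X / ((2:ℝ) ^ (2 * C1) - 1)
            + P_J * P_X / (P_X + 1) ^ 2 * (2:ℝ) ^ (-(2 * C2))))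
      ≤ (1/4) * logb 2 (8 * 4 * 9 * π * exp 1) := by
  intro C1 C2
  have hX0 : 0 < P_X := by linarith
  have hX1 : 0 < P_X + 1 := by linarith
  have hJ0 : 0 < P_J := by linarith
  have e1 : (2:ℝ) ^ (2 * C1) = 1 + P_X := by
    show (2:ℝ) ^ (2 * ((1/2) * logb 2 (1 + P_X))) = 1 + P_X
    rw [show 2 * ((1/2) * logb 2 (1 + P_X)) = logb 2 (1 + P_X) by ring]
    exact rpow_logb (by norm_num) (by norm_num) (by linarith)
  have e2 : (2:ℝ) ^ (-(2 * C2)) = P_J⁻¹ := by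
    show (2:ℝ) ^ (-(2 * ((1/2) * logb 2 P_J))) = P_J⁻¹
    rw [show -(2 * ((1/2) * logb 2 P_J)) = logb 2 P_J⁻¹ by rw [Real.logb_inv]; ring]
    exact rpow_logb (by norm_num) (by norm_num) (by positivity)
  rw [e1, e2]
  set D : ℝ := P_X / (P_X + 1) + P_X / (1 + P_X - 1) + P_J * P_X / (P_X + 1) ^ 2 * P_J⁻¹
    with hDdef
  have hDid : D * (P_X + 1) ^ 2 = 2 * P_X ^ 2 + 4 * P_X + 1 := by
    rw [hDdef]
    have hXne : P_X ≠ 0 := ne_of_gt hX0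
    rw [show 1 + P_X - 1 = P_X by ring]
    field_simp
    ring
  have hD0 : 0 < D := by
    rw [hDdef]
    have : (0:ℝ) < P_X / (1 + P_X - 1) := by
      apply div_pos hX0; linarith
    positivity
  have hπ : (0:ℝ) < π := pi_pos
  have he : (0:ℝ) < exp 1 := exp_pos 1
  -- key algebraic inequality
  have hJX : P_J * P_X < (1 + P_X) ^ 2 := by
    exact (lt_div_iff₀ hX0).mp hJ2
  have hs : (0:ℝ) ≤ P_X - 1 := by linarith
  have hp : (0:ℝ) ≤ 28*P_X^6 + 68*P_X^5 + 32*P_X^4 - 36*P_X^3 - 38*P_X^2 - 10*P_X - 1 := by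
    nlinarith [hs, pow_nonneg hs 2, pow_nonneg hs 3, pow_nonneg hs 4, pow_nonneg hs 5,
      pow_nonneg hs 6]
  have hq : (0:ℝ) ≤ (1 + P_X) * (2 * P_X ^ 2 + 4 * P_X + 1) ^ 2 := by positivity
  have h1 : P_J * P_X + P_X ^ 2 ≤ 2 * P_X ^ 2 + 2 * P_X + 1 := by nlinarith [hJX]
  have hstep1 := mul_le_mul_of_nonneg_right h1 hq
  have hstep2 : (2 * P_X ^ 2 + 2 * P_X + 1) * ((1 + P_X) * (2 * P_X ^ 2 + 4 * P_X + 1) ^ 2)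
      ≤ 36 * P_X ^ 3 * (P_X + 1) ^ 4 := by
    nlinarith [mul_nonneg (le_of_lt hX1) hp]
  have hpolyX : P_X * ((1 + P_X) * (P_J + P_X) * (2 * P_X ^ 2 + 4 * P_X + 1) ^ 2)
      ≤ P_X * (36 * P_X ^ 2 * (P_X + 1) ^ 4) := by
    nlinarith [hstep1, hstep2]
  have hpoly : (1 + P_X) * (P_J + P_X) * (2 * P_X ^ 2 + 4 * P_X + 1) ^ 2
      ≤ 36 * P_X ^ 2 * (P_X + 1) ^ 4 := le_of_mul_le_mul_left hpolyX hX0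
  have hcore : (1 + P_X) * (P_J + P_X) * D ^ 2 ≤ 36 * P_X ^ 2 := by
    have h4 : (0:ℝ) < (P_X + 1) ^ 4 := by positivity
    have h6 : (1 + P_X) * (P_J + P_X) * D ^ 2 * (P_X + 1) ^ 4
        ≤ 36 * P_X ^ 2 * (P_X + 1) ^ 4 := by
      calc (1 + P_X) * (P_J + P_X) * D ^ 2 * (P_X + 1) ^ 4
          = (1 + P_X) * (P_J + P_X) * (D * (P_X + 1) ^ 2) ^ 2 := by ring
        _ = (1 + P_X) * (P_J + P_X) * (2 * P_X ^ 2 + 4 * P_X + 1) ^ 2 := by rw [hDid]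
        _ ≤ 36 * P_X ^ 2 * (P_X + 1) ^ 4 := hpoly
    exact le_of_mul_le_mul_right h6 h4
  -- log identities
  have h1X : (0:ℝ) < 1 + P_X := by linarith
  have hXJ : (0:ℝ) < 1 + P_X / P_J := by positivity
  have lJ : logb 2 P_J + logb 2 (1 + P_X / P_J) = logb 2 (P_J + P_X) := by
    rw [← logb_mul (ne_of_gt hJ0) (ne_of_gt hXJ)]
    congr 1
    field_simp
  have lquot : logb 2 (P_X / D) = logb 2 P_X - logb 2 D := by
    exact logb_div (ne_of_gt hX0) (ne_of_gt hD0)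
  have lprod : logb 2 (1 + P_X) + logb 2 (P_J + P_X) + 2 * logb 2 D
      = logb 2 ((1 + P_X) * (P_J + P_X) * D ^ 2) := by
    rw [logb_mul (by positivity) (by positivity), logb_mul (ne_of_gt h1X) (by positivity),
      logb_pow]
    push_cast
    ring
  have lX2 : logb 2 (36 * P_X ^ 2) = logb 2 36 + 2 * logb 2 P_X := by
    rw [logb_mul (by norm_num) (by positivity), logb_pow]
    push_cast
    ring
  have lmain : logb 2 ((1 + P_X) * (P_J + P_X) * D ^ 2) ≤ logb 2 (36 * P_X ^ 2) :=
    logb_le_logb_of_le (by norm_num) (by positivity) hcore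
  have lrhs : logb 2 (8 * 4 * 9 * π * exp 1) = logb 2 36 + logb 2 (8 * π * exp 1) := by
    rw [show (8:ℝ) * 4 * 9 * π * exp 1 = 36 * (8 * π * exp 1) by ring,
      logb_mul (by norm_num) (by positivity)]
  rw [lquot, lrhs]
  have key : logb 2 (1 + P_X) + logb 2 (P_J + P_X) + 2 * logb 2 D
      ≤ logb 2 36 + 2 * logb 2 P_X := by
    rw [lprod]
    calc logb 2 ((1 + P_X) * (P_J + P_X) * D ^ 2) ≤ logb 2 (36 * P_X ^ 2) := lmain
      _ = logb 2 36 + 2 * logb 2 P_X := lX2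
  show (1/2) * ((1/2) * logb 2 (1 + P_X) + (1/2) * logb 2 P_J + (1/2) * logb 2 (1 + P_X / P_J))
      + (1/4) * logb 2 (8 * π * exp 1)
      - (1/2) * (logb 2 P_X - logb 2 D)
      ≤ (1/4) * (logb 2 36 + logb 2 (8 * π * exp 1))
  linarith [key, lJ]
end

section
/- For all real P_X > 1 and P_J > (1+P_X)²/P_X, with C_1 = C_2 = (1/2)·log₂(1+P_X), the gap C_1 + (1/2)·log₂(1 + P_X/(P_J+1)) − (1/2)·log₂(P_X/(P_X/(P_X+1) + P_X/(2^(2C_1)−1) + P_X·2^(−2C_2))) is at most (1/2)·log₂ 8 = 1.5. -/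
/-!
Since `2 ^ (2 C₁) = 1 + P_X` and `2 ^ (-2 C₂) = (1 + P_X)⁻¹`, the achievable-rate denominator
collapses to `(3 P_X + 1) / (P_X + 1)`, and the gap becomes
`½ log₂ ((1 + P_X / (P_J + 1)) (3 + 1 / P_X))`. The first factor is below `2` because
`P_J > (1 + P_X)² / P_X > P_X`, the second below `4` because `P_X > 1`.
-/

open Real

lemma rpow_two_mul_half_logb {b x : ℝ} (hb : 0 < b) (hb₁ : b ≠ 1) (hx : 0 < x) :
    b ^ (2 * ((1 / 2) * logb b x)) = x := by
  rw [← mul_assoc, mul_one_div_cancel two_ne_zero, one_mul, rpow_logb hb hb₁ hx]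

lemma lt_of_one_add_sq_div_lt {x y : ℝ} (hx : 0 < x) (h : (1 + x) ^ 2 / x < y) : x < y := by
  refine lt_trans ?_ h
  rw [lt_div_iff₀ hx]
  nlinarith

lemma caseC_gap_eq {P_X P_J : ℝ} (hX : 0 < P_X) (hJ : 0 < P_J + 1) :
    (1 / 2) * logb 2 (1 + P_X) + (1 / 2) * logb 2 (1 + P_X / (P_J + 1))
      - (1 / 2) * logb 2 (P_X / (P_X / (P_X + 1) + P_X / (1 + P_X - 1) + P_X * (1 + P_X)⁻¹))
      = (1 / 2) * logb 2 ((1 + P_X / (P_J + 1)) * (3 + 1 / P_X)) := by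
  have hden : P_X / (P_X / (P_X + 1) + P_X / (1 + P_X - 1) + P_X * (1 + P_X)⁻¹)
      = P_X * (P_X + 1) / (3 * P_X + 1) := by
    rw [add_sub_cancel_left]
    field_simp
    ring
  have hfactor : (1 + P_X) * (1 + P_X / (P_J + 1)) / (P_X * (P_X + 1) / (3 * P_X + 1))
      = (1 + P_X / (P_J + 1)) * (3 + 1 / P_X) := by
    field_simp
    ring
  have hb : 0 < 1 + P_X / (P_J + 1) := by positivity
  rw [hden, ← hfactor, logb_div (mul_pos (by positivity) hb).ne' (by positivity),
    logb_mul (by positivity) hb.ne']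
  ring

theorem caseC_gap_cutset (P_X P_J : ℝ) (hX : 1 < P_X) (hJ : (1 + P_X) ^ 2 / P_X < P_J) :
    let C1 := (1/2) * logb 2 (1 + P_X)
    let C2 := (1/2) * logb 2 (1 + P_X)
    C1 + (1/2) * logb 2 (1 + P_X / (P_J + 1))
      - (1/2) * logb 2 (P_X /
          (P_X / (P_X + 1) + P_X / ((2:ℝ) ^ (2 * C1) - 1)
            + P_X * (2:ℝ) ^ (-(2 * C2)))) ≤ (1/2) * logb 2 8 := by
  intro C1 C2
  have hX₀ : 0 < P_X := one_pos.trans hX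
  have hXJ : P_X < P_J := lt_of_one_add_sq_div_lt hX₀ hJ
  have hJ₁ : 0 < P_J + 1 := by linarith
  have h2C : (2:ℝ) ^ (2 * C1) = 1 + P_X :=
    rpow_two_mul_half_logb two_pos (by norm_num) (by linarith)
  rw [h2C, rpow_neg zero_le_two, h2C, caseC_gap_eq hX₀ hJ₁]
  have hrate : 1 + P_X / (P_J + 1) ≤ 2 := by
    have : P_X / (P_J + 1) ≤ 1 := (div_le_one hJ₁).mpr (by linarith)
    linarith
  have hsnr : 3 + 1 / P_X ≤ 4 := by
    have : 1 / P_X ≤ 1 := (div_le_one hX₀).mpr hX.le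
    linarith
  have hprod : (1 + P_X / (P_J + 1)) * (3 + 1 / P_X) ≤ 8 :=
    calc _ ≤ 2 * 4 := mul_le_mul hrate hsnr (by positivity) zero_le_two
      _ = 8 := by norm_num
  gcongr
  exact one_lt_two
end

section
/- There exist parameters exhibiting strict looseness of the cut-set bound in Case C: setting P_J = √P_X, C_1 = C_2 = (1/4)·log₂ P_X, then as P_X → ∞ the cut-set bound min{C_1+C_2, C_1 + (1/2)log₂(1+P_X/(P_J+1)), C_2 + (1/2)log₂(1+P_X/(P_J+1)), (1/2)log₂(1+2P_X)} divided by log₂ P_X tends to 1/2, while the modulo bound (1/2)(C_1+C_2+(1/2)log₂(1+P_X/P_J)) + (1/4)log₂(8πe) divided by log₂ P_X tends to 3/8. -/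
open Real Filter Topology

/-! If `h x / x ^ c → L > 0`, then `log (h x) = c * log x + O(1)`, so `log (h x) / log x → c`.
Each bound is a combination of `log P_X` and such logarithms, with `c = 1/2` for
`1 + P_X / (√P_X + 1)` and `1 + P_X / √P_X`, and `c = 1` for `1 + 2 P_X`; the constant
`log (8πe)` disappears after normalization. -/

theorem tendsto_log_div_log_of_tendsto_div_rpow {h : ℝ → ℝ} {c L : ℝ} (hL : 0 < L)
    (hh : Tendsto (fun x => h x / x ^ c) atTop (𝓝 L)) :
    Tendsto (fun x => log (h x) / log x) atTop (𝓝 c) := by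
  have hlog : Tendsto (fun x => log (h x / x ^ c) * (log x)⁻¹ + c) atTop (𝓝 (log L * 0 + c)) :=
    (((continuousAt_log hL.ne').tendsto.comp hh).mul
      tendsto_log_atTop.inv_tendsto_atTop).add tendsto_const_nhds
  rw [mul_zero, zero_add] at hlog
  refine hlog.congr' ?_
  filter_upwards [hh.eventually (eventually_gt_nhds hL), eventually_gt_atTop 1]
    with x hratio hx
  have hx₀ : 0 < x := one_pos.trans hx
  have hpow : 0 < x ^ c := rpow_pos_of_pos hx₀ c
  have hhx : 0 < h x := (div_pos_iff_of_pos_right hpow).mp hratio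
  rw [log_div hhx.ne' hpow.ne', log_rpow hx₀]
  field_simp [(log_pos hx).ne']
  ring

theorem logb_div_logb {b : ℝ} (hb₀ : 0 < b) (hb₁ : b ≠ 1) (x y : ℝ) :
    logb b y / logb b x = log y / log x :=
  div_div_div_cancel_right₀ (log_ne_zero_of_pos_of_ne_one hb₀ hb₁) _ _

theorem tendsto_logb_div_logb_of_tendsto_div_rpow {b : ℝ} (hb₀ : 0 < b) (hb₁ : b ≠ 1)
    {h : ℝ → ℝ} {c L : ℝ} (hL : 0 < L) (hh : Tendsto (fun x => h x / x ^ c) atTop (𝓝 L)) :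
    Tendsto (fun x => logb b (h x) / logb b x) atTop (𝓝 c) := by
  simpa only [logb_div_logb hb₀ hb₁] using tendsto_log_div_log_of_tendsto_div_rpow hL hh

theorem tendsto_inv_sqrt_atTop_zero : Tendsto (fun x : ℝ => (√x)⁻¹) atTop (𝓝 0) :=
  tendsto_sqrt_atTop.inv_tendsto_atTop

theorem tendsto_one_add_div_sqrt_add_one_div_sqrt :
    Tendsto (fun x : ℝ => (1 + x / (√x + 1)) / x ^ (1 / 2 : ℝ)) atTop (𝓝 1) := by
  have hlim : Tendsto (fun x : ℝ => (√x)⁻¹ + (1 + (√x)⁻¹)⁻¹) atTop (𝓝 (0 + (1 + 0)⁻¹)) :=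
    tendsto_inv_sqrt_atTop_zero.add
      ((tendsto_const_nhds.add tendsto_inv_sqrt_atTop_zero).inv₀ (by norm_num))
  norm_num at hlim
  refine hlim.congr' ?_
  filter_upwards [eventually_gt_atTop 0] with x hx
  have hsqrt : 0 < √x := sqrt_pos.mpr hx
  rw [← sqrt_eq_rpow]
  field_simp
  linear_combination mul_self_sqrt hx.le

theorem tendsto_one_add_two_mul_div_self :
    Tendsto (fun x : ℝ => (1 + 2 * x) / x ^ (1 : ℝ)) atTop (𝓝 2) := by
  have hlim : Tendsto (fun x : ℝ => x⁻¹ + 2) atTop (𝓝 (0 + 2)) :=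
    tendsto_inv_atTop_zero.add tendsto_const_nhds
  rw [zero_add] at hlim
  refine hlim.congr' ?_
  filter_upwards [eventually_gt_atTop 0] with x hx
  rw [rpow_one]
  field_simp

theorem tendsto_one_add_sqrt_div_sqrt :
    Tendsto (fun x : ℝ => (1 + √x) / x ^ (1 / 2 : ℝ)) atTop (𝓝 1) := by
  have hlim : Tendsto (fun x : ℝ => (√x)⁻¹ + 1) atTop (𝓝 (0 + 1)) :=
    tendsto_inv_sqrt_atTop_zero.add tendsto_const_nhds
  rw [zero_add] at hlim
  refine hlim.congr' ?_
  filter_upwards [eventually_gt_atTop 0] with x hx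
  have hsqrt : 0 < √x := sqrt_pos.mpr hx
  rw [← sqrt_eq_rpow]
  field_simp

theorem cutset_strictly_loose :
    Filter.Tendsto (fun P_X : ℝ =>
        (min ((1/4) * logb 2 P_X + (1/4) * logb 2 P_X)
          (min ((1/4) * logb 2 P_X + (1/2) * logb 2 (1 + P_X / (Real.sqrt P_X + 1)))
            (min ((1/4) * logb 2 P_X + (1/2) * logb 2 (1 + P_X / (Real.sqrt P_X + 1)))
              ((1/2) * logb 2 (1 + 2 * P_X)))))
          / logb 2 P_X)
      Filter.atTop (nhds (1/2)) ∧
    Filter.Tendsto (fun P_X : ℝ =>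
        ((1/2) * ((1/4) * logb 2 P_X + (1/4) * logb 2 P_X
            + (1/2) * logb 2 (1 + P_X / Real.sqrt P_X))
          + (1/4) * logb 2 (8 * π * exp 1)) / logb 2 P_X)
      Filter.atTop (nhds (3/8)) := by
  have hℓ : ∀ᶠ x : ℝ in atTop, 0 < logb 2 x :=
    (eventually_gt_atTop 1).mono fun x hx => logb_pos one_lt_two hx
  have hrelay := tendsto_logb_div_logb_of_tendsto_div_rpow two_pos (by norm_num) one_pos
    tendsto_one_add_div_sqrt_add_one_div_sqrt
  have hdirect := tendsto_logb_div_logb_of_tendsto_div_rpow two_pos (by norm_num) two_pos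
    tendsto_one_add_two_mul_div_self
  have hmodulo := tendsto_logb_div_logb_of_tendsto_div_rpow two_pos (by norm_num) one_pos
    tendsto_one_add_sqrt_div_sqrt
  have hconst : Tendsto (fun x => logb 2 (8 * π * exp 1) / logb 2 x) atTop (𝓝 0) :=
    (tendsto_logb_atTop one_lt_two).const_div_atTop _
  constructor
  · have hlim := tendsto_const_nhds (x := (1/4 + 1/4 : ℝ)).min
      (((hrelay.const_mul (1/2)).const_add (1/4)).min
        (((hrelay.const_mul (1/2)).const_add (1/4)).min (hdirect.const_mul (1/2))))
    norm_num at hlim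
    refine hlim.congr' ?_
    filter_upwards [hℓ] with x hx
    simp only [← min_div_div_right hx.le, add_div, mul_div_assoc, div_self hx.ne']
    norm_num
  · have hlim := (((hmodulo.const_mul (1/4)).const_add (1/4)).add (hconst.const_mul (1/4)))
    norm_num at hlim
    refine hlim.congr' ?_
    filter_upwards [hℓ, eventually_gt_atTop 0] with x hx hx₀
    rw [div_sqrt]
    field_simp
    ring
end

section
/- For positive reals P_X, P_J and rates C_1, C_2 with C_1 = R and C_2 = R − (1/2)·log₂(1+P_X/P_J) ≥ 0, the expression (1/2)·log₂(P_X / (P_X·2^(−2C_1) + min{P_X,P_J}·2^(−2C_2))) equals (1/2)·log₂(2^(2R)·P_X / (P_X + min{P_X,P_J}·(1+P_X/P_J))), and since min{P_X,P_J}·(1+P_X/P_J) ≤ P_X + P_J ≤ 2·max{P_X,P_J}, this expression is at least R − (1/2)·log₂(1 + 2·max{P_X,P_J}/P_X). -/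
open Real

theorem caseC_corner_point (P_X P_J R C1 C2 : ℝ) (hX : 0 < P_X) (hJ : 0 < P_J)
    (hC1 : C1 = R) (hC2 : C2 = R - (1/2) * logb 2 (1 + P_X / P_J)) (hC2pos : 0 ≤ C2) :
    (1/2) * logb 2 (P_X /
        (P_X * (2:ℝ) ^ (-(2 * C1)) + min P_X P_J * (2:ℝ) ^ (-(2 * C2))))
      = (1/2) * logb 2 ((2:ℝ) ^ (2 * R) * P_X
          / (P_X + min P_X P_J * (1 + P_X / P_J))) ∧
    min P_X P_J * (1 + P_X / P_J) ≤ P_X + P_J ∧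
    P_X + P_J ≤ 2 * max P_X P_J ∧
    R - (1/2) * logb 2 (1 + 2 * max P_X P_J / P_X)
      ≤ (1/2) * logb 2 (P_X /
          (P_X * (2:ℝ) ^ (-(2 * C1)) + min P_X P_J * (2:ℝ) ^ (-(2 * C2)))) := by
  have h2 : (0:ℝ) < 2 := by norm_num
  have h21 : (2:ℝ) ≠ 1 := by norm_num
  have hq : (0:ℝ) < 1 + P_X / P_J := by positivity
  have hmin : 0 < min P_X P_J := lt_min hX hJ
  set t : ℝ := (2:ℝ) ^ (2 * R) with ht_def
  have ht : 0 < t := rpow_pos_of_pos h2 _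
  set D : ℝ := P_X + min P_X P_J * (1 + P_X / P_J) with hD_def
  have hD : 0 < D := by positivity
  -- rewrite the powers
  have hpowC2 : (2:ℝ) ^ (-(2 * C2)) = t⁻¹ * (1 + P_X / P_J) := by
    have : -(2 * C2) = -(2 * R) + logb 2 (1 + P_X / P_J) := by rw [hC2]; ring
    rw [this, rpow_add h2, rpow_logb h2 h21 hq, rpow_neg (le_of_lt h2), ht_def]
  have hpowC1 : (2:ℝ) ^ (-(2 * C1)) = t⁻¹ := by
    rw [hC1, rpow_neg (le_of_lt h2), ht_def]
  have hratio : P_X / (P_X * (2:ℝ) ^ (-(2 * C1)) + min P_X P_J * (2:ℝ) ^ (-(2 * C2)))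
      = t * P_X / D := by
    rw [hpowC1, hpowC2, hD_def]
    field_simp
  refine ⟨by rw [hratio], ?_, ?_, ?_⟩
  · rcases le_total P_X P_J with h | h
    · rw [min_eq_left h]
      have : P_X * (1 + P_X / P_J) = P_X + P_X * P_X / P_J := by ring
      rw [this]
      have : P_X * P_X / P_J ≤ P_J := by
        rw [div_le_iff₀ hJ]
        nlinarith
      linarith
    · rw [min_eq_right h]
      have : P_J * (1 + P_X / P_J) = P_J + P_X := by field_simp
      rw [this]; linarith
  · rcases le_total P_X P_J with h | h
    · rw [max_eq_right h]; linarith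
    · rw [max_eq_left h]; linarith
  · rw [hratio]
    have hmaxpos : 0 < max P_X P_J := lt_max_of_lt_left hX
    have hDle : D ≤ P_X + 2 * max P_X P_J := by
      have h1 : min P_X P_J * (1 + P_X / P_J) ≤ P_X + P_J := by
        rcases le_total P_X P_J with h | h
        · rw [min_eq_left h]
          have : P_X * P_X / P_J ≤ P_J := by
            rw [div_le_iff₀ hJ]; nlinarith
          have e : P_X * (1 + P_X / P_J) = P_X + P_X * P_X / P_J := by ring
          rw [e]; linarith
        · rw [min_eq_right h]
          have e : P_J * (1 + P_X / P_J) = P_J + P_X := by field_simp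
          rw [e]; linarith
      have h2' : P_X + P_J ≤ 2 * max P_X P_J := by
        rcases le_total P_X P_J with h | h
        · rw [max_eq_right h]; linarith
        · rw [max_eq_left h]; linarith
      rw [hD_def]; linarith
    have hle : t / (1 + 2 * max P_X P_J / P_X) ≤ t * P_X / D := by
      have e : t / (1 + 2 * max P_X P_J / P_X) = t * P_X / (P_X + 2 * max P_X P_J) := by
        rw [div_eq_div_iff (by positivity) (by positivity)]
        field_simp
      rw [e]
      gcongr
    have hlog : logb 2 (t / (1 + 2 * max P_X P_J / P_X)) ≤ logb 2 (t * P_X / D) :=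
      logb_le_logb_of_le (by norm_num) (by positivity) hle
    have hcalc : logb 2 (t / (1 + 2 * max P_X P_J / P_X))
        = 2 * R - logb 2 (1 + 2 * max P_X P_J / P_X) := by
      rw [logb_div (ne_of_gt ht) (by positivity), ht_def, logb_rpow h2 h21]
    linarith
end
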